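/- arXiv:1202.6085 — 5 statements merged into one kernel-verified Lean document; each statement's English description precedes it below -/
import Mathlib

section
/- Let G be a connected simple graph in which every vertex is counted in its own closed neighborhood (a loop at every vertex), and let P be a geodesic path of length k in G (i.e., a path between vertices x and y whose length equals the distance from x to y). Then the neighborhood N(P), i.e., the set of all vertices adjacent to some vertex of P (each vertex being adjacent to itself), has size at least (⌊k/3⌋ + 1)·δ(G), where δ(G) is the minimum degree of G. -/
open SimpleGraph

private lemma getVert_mem_support' {V : Type*} {G : SimpleGraph V} {x y : V}
    (p : G.Walk x y) (i : ℕ) : p.getVert i ∈ p.support := by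
  induction p generalizing i with
  | nil => simp [Walk.getVert]
  | cons h q ih =>
    cases i with
    | zero => simp [Walk.getVert]
    | succ n => simp only [Walk.getVert, Walk.support_cons, List.mem_cons]; exact Or.inr (ih n)

private lemma dist_start_getVert {V : Type*} {G : SimpleGraph V} (hG : G.Connected)
    {x y : V} (p : G.Walk x y) (i : ℕ) : G.dist x (p.getVert i) ≤ i := by
  induction p generalizing i with
  | nil => simp [Walk.getVert, SimpleGraph.dist_self]
  | @cons u v w h q ih =>
    cases i with
    | zero => simp [Walk.getVert]
    | succ n =>
      calc G.dist u ((Walk.cons h q).getVert (n + 1))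
          ≤ G.dist u v + G.dist v (q.getVert n) := hG.dist_triangle
        _ ≤ 1 + n := by
            have h1 : G.dist u v ≤ 1 := by
              simpa using SimpleGraph.dist_le (Walk.cons h Walk.nil)
            exact Nat.add_le_add h1 (ih n)
        _ = n + 1 := Nat.add_comm 1 n

private lemma dist_getVert_end {V : Type*} {G : SimpleGraph V} (hG : G.Connected)
    {x y : V} (p : G.Walk x y) (i : ℕ) (hi : i ≤ p.length) :
    G.dist (p.getVert i) y ≤ p.length - i := by
  have h1 : p.reverse.getVert (p.length - i) = p.getVert i := by
    rw [Walk.getVert_reverse]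
    congr 1
    omega
  rw [SimpleGraph.dist_comm, ← h1]
  simpa using dist_start_getVert hG p.reverse (p.length - i)

/-- For a geodesic path `p` of length `k` in a connected graph `G`
(with a loop at every vertex, so the closed neighbourhood `N(w) = {w} ∪ N_G(w)` has
size at least `δ(G) + 1`), the neighbourhood of `p` has at least `(⌊k/3⌋ + 1)·δ`
vertices, where `δ = G.minDegree + 1` is the minimum degree counting loops. -/
theorem edge_growth_geodesic_neighborhood {V : Type*} [Fintype V]
    (G : SimpleGraph V) [DecidableRel G.Adj] (hG : G.Connected)
    (k : ℕ) (x y : V) (p : G.Walk x y)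
    (hgeo : p.length = G.dist x y) (hlen : p.length = k) :
    (k / 3 + 1) * (G.minDegree + 1) ≤
      {u : V | ∃ w ∈ p.support, w = u ∨ G.Adj w u}.ncard := by
  classical
  set m := k / 3 with hm
  set a : ℕ → V := fun i => p.getVert (3 * i) with ha
  set f : ℕ → Finset V := fun i => insert (a i) (G.neighborFinset (a i)) with hf
  -- dist bounds
  have hdx : ∀ i, G.dist x (a i) ≤ 3 * i := fun i => dist_start_getVert hG p (3 * i)
  have hdy : ∀ i, i ≤ m → G.dist (a i) y ≤ k - 3 * i := by
    intro i hi
    have h3 : 3 * i ≤ p.length := by omega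
    simpa [hlen] using dist_getVert_end hG p (3 * i) h3
  -- far apart
  have hfar : ∀ i j, i < j → j ≤ m → 3 ≤ G.dist (a i) (a j) := by
    intro i j hij hj
    by_contra hcon
    push_neg at hcon
    have hk : G.dist x y = k := by rw [← hgeo, hlen]
    have : G.dist x y ≤ G.dist x (a i) + G.dist (a i) y := hG.dist_triangle
    have h2 : G.dist (a i) y ≤ G.dist (a i) (a j) + G.dist (a j) y := hG.dist_triangle
    have h3 : G.dist (a j) y ≤ k - 3 * j := hdy j hj
    have h4 : G.dist x (a i) ≤ 3 * i := hdx i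
    have h5 : 3 * j ≤ k := by omega
    omega
  -- disjointness of closed neighborhoods
  have hdisj : ∀ i ∈ Finset.range (m + 1), ∀ j ∈ Finset.range (m + 1),
      i ≠ j → Disjoint (f i) (f j) := by
    have key : ∀ i j, i < j → j ≤ m → Disjoint (f i) (f j) := by
      intro i j hij hj
      rw [Finset.disjoint_left]
      intro u hui huj
      simp only [hf, Finset.mem_insert, mem_neighborFinset] at hui huj
      have d1 : G.dist (a i) u ≤ 1 := by
        rcases hui with rfl | h
        · simp [SimpleGraph.dist_self]
        · simpa using SimpleGraph.dist_le (Walk.cons h Walk.nil)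
      have d2 : G.dist u (a j) ≤ 1 := by
        rcases huj with rfl | h
        · simp [SimpleGraph.dist_self]
        · simpa using SimpleGraph.dist_le (Walk.cons h.symm Walk.nil)
      have := hfar i j hij hj
      have htri : G.dist (a i) (a j) ≤ G.dist (a i) u + G.dist u (a j) :=
        hG.dist_triangle
      omega
    intro i hi j hj hij
    simp only [Finset.mem_range] at hi hj
    rcases Nat.lt_or_ge i j with h | h
    · exact key i j h (by omega)
    · exact (key j i (by omega) (by omega)).symm
  -- each f i has card ≥ minDegree + 1
  have hcard : ∀ i, G.minDegree + 1 ≤ (f i).card := by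
    intro i
    have hnotmem : a i ∉ G.neighborFinset (a i) := by
      simp [mem_neighborFinset]
    rw [hf]
    simp only
    rw [Finset.card_insert_of_notMem hnotmem]
    have := G.minDegree_le_degree (a i)
    rw [← SimpleGraph.card_neighborFinset_eq_degree] at this
    omega
  -- union is inside the set
  set S : Set V := {u : V | ∃ w ∈ p.support, w = u ∨ G.Adj w u} with hS
  have hsub : (Finset.range (m + 1)).biUnion f ⊆ S.toFinset := by
    intro u hu
    rw [Finset.mem_biUnion] at hu
    obtain ⟨i, _, hui⟩ := hu
    simp only [hf, Finset.mem_insert, mem_neighborFinset] at hui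
    rw [Set.mem_toFinset]
    exact ⟨a i, getVert_mem_support' p (3 * i), by tauto⟩
  have hncard : S.ncard = S.toFinset.card := by
    rw [Set.ncard_eq_toFinset_card']
  calc (m + 1) * (G.minDegree + 1)
      = ∑ _i ∈ Finset.range (m + 1), (G.minDegree + 1) := by
        simp [Finset.sum_const, Nat.mul_comm]
    _ ≤ ∑ i ∈ Finset.range (m + 1), (f i).card :=
        Finset.sum_le_sum fun i _ => hcard i
    _ = ((Finset.range (m + 1)).biUnion f).card :=
        (Finset.card_biUnion hdisj).symm
    _ ≤ S.toFinset.card := Finset.card_le_card hsub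
    _ = S.ncard := hncard.symm
end

section
/- Let G be a connected graph (with a loop at every vertex) of diameter at least r, where r ≡ 0 (mod 3) and r ≥ 6. If a vertex v satisfies |N^r(v)| < (r/3 + 1)·δ(G), then there exists a vertex at distance exactly r+1 from v. -/
/-- The ball of radius `r` around `v` (the `r`-th neighbourhood `N^r(v)`). -/
def SimpleGraph.distBall {V : Type*} (G : SimpleGraph V) (r : ℕ) (v : V) : Set V :=
  {u : V | G.dist v u ≤ r}

/-!
If no vertex lies at distance `r + 1` from `v`, then no vertex lies farther either (a geodesic
to it would pass through distance `r + 1`), so `N^r(v)` is the whole graph. On the other hand a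
geodesic of length at least `r` carries `r/3 + 1` vertices spaced three apart; their closed
neighbourhoods are pairwise disjoint and each has at least `δ` vertices, so the graph has at
least `(r/3 + 1)·δ` vertices, contradicting insufficiency of `v`.
-/

open Finset

namespace SimpleGraph

variable {V : Type*} {G : SimpleGraph V}

lemma Walk.dist_getVert_le {u v : V} (p : G.Walk u v) {i j : ℕ} (hij : i ≤ j) :
    G.dist (p.getVert i) (p.getVert j) ≤ j - i := by
  have h := dist_le ((p.drop i).take (j - i))
  rw [take_length, drop_getVert, Nat.add_sub_cancel' hij] at h
  exact h.trans (min_le_left _ _)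

lemma Walk.dist_getVert_of_length_eq_dist {u v : V} (p : G.Walk u v)
    (hp : p.length = G.dist u v) {i j : ℕ} (hij : i ≤ j) (hj : j ≤ p.length) :
    G.dist (p.getVert i) (p.getVert j) = j - i := by
  have hstart : G.dist u (p.getVert i) ≤ i := by
    simpa using p.dist_getVert_le (Nat.zero_le i)
  have hend : G.dist (p.getVert j) v ≤ p.length - j := by
    simpa using p.dist_getVert_le hj
  have hvia_j := (p.drop j).reachable.dist_triangle_right u
  have hvia_i := (p.take i).reachable.dist_triangle_left (p.getVert j)
  have := p.dist_getVert_le hij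
  omega

lemma Reachable.exists_dist_eq_of_le {u v : V} (h : G.Reachable u v) {k : ℕ}
    (hk : k ≤ G.dist u v) : ∃ w, G.dist u w = k := by
  obtain ⟨p, hp⟩ := h.exists_walk_length_eq_dist
  refine ⟨p.getVert k, ?_⟩
  simpa using p.dist_getVert_of_length_eq_dist hp (Nat.zero_le k) (hp ▸ hk)

lemma Connected.distBall_eq_univ (hG : G.Connected) {v : V} {r : ℕ}
    (h : ∀ u, G.dist v u ≠ r + 1) : G.distBall r v = Set.univ := by
  refine Set.eq_univ_of_forall fun u => ?_
  by_contra! hu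
  obtain ⟨w, hw⟩ := (hG v u).exists_dist_eq_of_le (k := r + 1) (by simpa [distBall] using hu)
  exact h w hw

lemma Walk.pairwise_three_le_dist_getVert_three_mul {u v : V} (p : G.Walk u v)
    (hp : p.length = G.dist u v) {m : ℕ} (hm : 3 * m ≤ p.length) :
    (range (m + 1) : Set ℕ).Pairwise
      fun i j => 3 ≤ G.dist (p.getVert (3 * i)) (p.getVert (3 * j)) := by
  intro i hi j hj hij
  simp only [coe_range, Set.mem_Iio] at hi hj
  rcases hij.lt_or_gt with h | h
  · rw [p.dist_getVert_of_length_eq_dist hp (by omega) (by omega)]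
    omega
  · rw [dist_comm, p.dist_getVert_of_length_eq_dist hp (by omega) (by omega)]
    omega

lemma dist_le_two_of_eq_or_adj {x y z : V} (hx : x = z ∨ G.Adj x z) (hy : y = z ∨ G.Adj y z) :
    G.dist x y ≤ 2 := by
  have near : ∀ {a}, a = z ∨ G.Adj a z → G.Reachable a z ∧ G.dist a z ≤ 1 := by
    rintro a (rfl | hadj)
    · simp
    · exact ⟨hadj.reachable, (dist_eq_one_iff_adj.mpr hadj).le⟩
  obtain ⟨hxz, hxz'⟩ := near hx
  obtain ⟨-, hyz'⟩ := near hy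
  have := hxz.dist_triangle_left y
  rw [dist_comm (u := z)] at this
  omega

lemma card_mul_minDegree_add_one_le_card [Fintype V] [DecidableRel G.Adj] {ι : Type*}
    {s : Finset ι} {f : ι → V} (hs : (s : Set ι).Pairwise fun i j => 3 ≤ G.dist (f i) (f j)) :
    #s * (G.minDegree + 1) ≤ Fintype.card V := by
  classical
  set closedNbhd : ι → Finset V := fun i => insert (f i) (G.neighborFinset (f i))
  have hdisj : (s : Set ι).PairwiseDisjoint closedNbhd := by
    intro i hi j hj hij
    rw [Function.onFun, Finset.disjoint_left]
    intro z hzi hzj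
    have hclose : G.dist (f i) (f j) ≤ 2 := dist_le_two_of_eq_or_adj
      (by simpa [closedNbhd, eq_comm] using hzi) (by simpa [closedNbhd, eq_comm] using hzj)
    have := hs hi hj hij
    omega
  calc #s * (G.minDegree + 1)
      ≤ ∑ i ∈ s, #(closedNbhd i) := by
        rw [← smul_eq_mul, ← sum_const]
        refine sum_le_sum fun i _ => ?_
        rw [card_insert_of_notMem (by simp), card_neighborFinset_eq_degree]
        exact Nat.succ_le_succ (G.minDegree_le_degree _)
    _ = #(s.biUnion closedNbhd) := (card_biUnion hdisj).symm
    _ ≤ Fintype.card V := card_le_univ _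

end SimpleGraph

theorem edge_growth_insufficient_far_vertex_general {V : Type*} [Fintype V]
    (G : SimpleGraph V) [DecidableRel G.Adj] (hG : G.Connected)
    (r : ℕ)
    (hdiam : ∃ u w : V, r ≤ G.dist u w)
    (v : V) (hins : (G.distBall r v).ncard < (r / 3 + 1) * (G.minDegree + 1)) :
    ∃ u : V, G.dist v u = r + 1 := by
  by_contra! hfar
  rw [hG.distBall_eq_univ hfar, Set.ncard_univ, Nat.card_eq_fintype_card] at hins
  obtain ⟨u, w, hr⟩ := hdiam
  obtain ⟨p, hp⟩ := hG.exists_walk_length_eq_dist u w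
  have hpack := SimpleGraph.card_mul_minDegree_add_one_le_card
    (p.pairwise_three_le_dist_getVert_three_mul hp (m := r / 3) (by omega))
  rw [card_range] at hpack
  omega

/-- in a connected graph with a loop at every vertex (so the minimum
degree counting loops is `G.minDegree + 1`), if `r ≡ 0 (mod 3)`, `r ≥ 6`,
`diam(G) ≥ r` and `v` is insufficient (i.e. `|N^r(v)| < (r/3 + 1)·δ`), then some
vertex is at distance exactly `r + 1` from `v`. -/
theorem edge_growth_insufficient_far_vertex {V : Type*} [Fintype V]
    (G : SimpleGraph V) [DecidableRel G.Adj] (hG : G.Connected)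
    (r : ℕ) (hr3 : r % 3 = 0) (hr : 6 ≤ r)
    (hdiam : ∃ u w : V, r ≤ G.dist u w)
    (v : V) (hins : (G.distBall r v).ncard < (r / 3 + 1) * (G.minDegree + 1)) :
    ∃ u : V, G.dist v u = r + 1 :=
  edge_growth_insufficient_far_vertex_general G hG r hdiam v hins
end

section
/- Let G be a connected graph in which every vertex has a loop, with minimum degree δ (counting loops), and let r ≥ 6 with r ≢ 0 (mod 3) and diam(G) ≥ r. Then the number of edges of G^r satisfies e(G^r) ≥ (1/2)·⌈r/3⌉·δ·|G| + (1/2)·|G|. -/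
/-!
Every ball of radius `r` has at least `⌈r/3⌉ (δ + 1)` vertices; since the ball around `v` is the
closed neighbourhood of `v` in `G^r`, summing over `v` gives the bound. To fill the ball around
`v`, take `u`, `w` at distance `≥ r` with `v` closer to `u`, and walk from `v` along geodesics
towards `w` and towards `u` (on the latter only from the level on which the two geodesics are
`3` apart). These walks provide at least `r` vertices at levels `< r`; those whose level lies in
the most popular residue class mod `3` are pairwise at distance `≥ 3`, so their closed
neighbourhoods are disjoint subsets of the ball.
-/

def SimpleGraph.power {V : Type*} (G : SimpleGraph V) (r : ℕ) : SimpleGraph V where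
  Adj u v := u ≠ v ∧ G.dist u v ≤ r
  symm := ⟨fun u v h => ⟨h.1.symm, by rw [SimpleGraph.dist_comm]; exact h.2⟩⟩
  loopless := ⟨fun v h => h.1 rfl⟩

open Finset

namespace SimpleGraph

variable {V : Type*} {G : SimpleGraph V}

@[simp]
lemma power_adj {r : ℕ} {u v : V} : (G.power r).Adj u v ↔ u ≠ v ∧ G.dist u v ≤ r := Iff.rfl

lemma Connected.exists_dist_eq_of_le_dist (hG : G.Connected) {x y : V} {i : ℕ}
    (hi : i ≤ G.dist x y) : ∃ z, G.dist x z = i ∧ i + G.dist z y = G.dist x y := by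
  obtain ⟨p, hp⟩ := hG.exists_walk_length_eq_dist x y
  have hx : G.dist x (p.getVert i) ≤ i := (dist_le (p.take i)).trans (by simp)
  have hy : G.dist (p.getVert i) y ≤ G.dist x y - i := (dist_le (p.drop i)).trans (by simp [hp])
  have := hG.dist_triangle (u := x) (v := p.getVert i) (w := y)
  exact ⟨p.getVert i, by omega, by omega⟩

lemma Connected.three_le_dist_of_dist_mod_three_eq (hG : G.Connected) {v x y : V}
    (hne : G.dist v x ≠ G.dist v y) (hmod : G.dist v x % 3 = G.dist v y % 3) :
    3 ≤ G.dist x y := by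
  have hxy := hG.dist_triangle (u := v) (v := x) (w := y)
  have hyx := hG.dist_triangle (u := v) (v := y) (w := x)
  have hcomm : G.dist y x = G.dist x y := dist_comm
  omega

lemma Connected.exists_separated_subset_image (hG : G.Connected) (v : V) {ι : Type*}
    (S : Finset ι) (f : ι → V)
    (hsep : ∀ p ∈ S, ∀ q ∈ S, p ≠ q → G.dist v (f p) = G.dist v (f q) →
      3 ≤ G.dist (f p) (f q)) :
    ∃ C : Finset V, (C : Set V) ⊆ f '' S ∧ #S ≤ 3 * #C ∧
      (C : Set V).Pairwise fun x y => 3 ≤ G.dist x y := by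
  classical
  let residue p := G.dist v (f p) % 3
  obtain ⟨ρ, -, hρ⟩ :=
    (range 3).exists_max_image (fun ρ => #{p ∈ S | residue p = ρ}) nonempty_range_add_one
  set T := {p ∈ S | residue p = ρ}
  have hcard : #S ≤ 3 * #T := by
    rw [card_eq_sum_card_fiberwise (f := residue) (t := range 3)
      fun p _ => mem_range.2 (Nat.mod_lt _ three_pos)]
    simpa using sum_le_card_nsmul _ _ _ hρ
  have hT : ∀ p ∈ T, ∀ q ∈ T, p ≠ q → 3 ≤ G.dist (f p) (f q) := by
    intro p hp q hq hpq
    simp only [T, mem_filter] at hp hq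
    by_cases hlev : G.dist v (f p) = G.dist v (f q)
    · exact hsep p hp.1 q hq.1 hpq hlev
    · exact hG.three_le_dist_of_dist_mod_three_eq hlev (hp.2.trans hq.2.symm)
  have hinj : Set.InjOn f T := fun p hp q hq hfpq => by
    by_contra hpq
    simpa [hfpq] using hT p hp q hq hpq
  refine ⟨T.image f, ?_, ?_, ?_⟩
  · rw [coe_image]
    exact Set.image_mono (coe_subset.2 (filter_subset _ _))
  · rwa [card_image_of_injOn hinj]
  · rw [coe_image, hinj.pairwise_image]
    exact fun p hp q hq => hT p hp q hq

variable [Fintype V]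

lemma Connected.card_mul_le_card_dist_le [DecidableRel G.Adj] (hG : G.Connected) {v : V} {r : ℕ}
    {C : Finset V} (hCv : ∀ x ∈ C, G.dist v x < r)
    (hC : (C : Set V).Pairwise fun x y => 3 ≤ G.dist x y) :
    #C * (G.minDegree + 1) ≤ #{z | G.dist v z ≤ r} := by
  classical
  let N x := insert x (G.neighborFinset x)
  have hN : ∀ x, ∀ z ∈ N x, G.dist x z ≤ 1 := by
    intro x z hz
    rcases mem_insert.1 hz with rfl | hz
    · simp
    · simpa using dist_le ((mem_neighborFinset ..).1 hz).toWalk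
  have hdisj : (C : Set V).PairwiseDisjoint N := by
    intro x hx y hy hxy
    rw [Function.onFun, Finset.disjoint_left]
    intro z hzx hzy
    have := hG.dist_triangle (u := x) (v := z) (w := y)
    have := hN x z hzx
    have := hN y z hzy
    have : G.dist z y = G.dist y z := dist_comm
    have := hC hx hy hxy
    omega
  calc #C * (G.minDegree + 1) ≤ ∑ x ∈ C, #(N x) := by
        rw [← smul_eq_mul]
        refine card_nsmul_le_sum _ _ _ fun x _ => ?_
        rw [card_insert_of_notMem (G.notMem_neighborFinset_self x), card_neighborFinset_eq_degree]
        exact Nat.add_le_add_right (G.minDegree_le_degree x) 1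
    _ = #(C.biUnion N) := (card_biUnion hdisj).symm
    _ ≤ #{z | G.dist v z ≤ r} := card_le_card fun z hz => by
        obtain ⟨x, hx, hzx⟩ := mem_biUnion.1 hz
        have := hG.dist_triangle (u := v) (v := x) (w := z)
        have := hN x z hzx
        have := hCv x hx
        simp only [mem_filter, mem_univ, true_and]
        omega

lemma Connected.le_card_dist_le [DecidableRel G.Adj] (hG : G.Connected) {u w v : V} {r : ℕ}
    (huw : r ≤ G.dist u w) (hvu : G.dist v u ≤ G.dist v w) :
    (r + 2) / 3 * (G.minDegree + 1) ≤ #{z | G.dist v z ≤ r} := by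
  set a := G.dist v u
  set b := G.dist v w
  have hab : r ≤ a + b := by
    have := hG.dist_triangle (u := u) (v := v) (w := w)
    have : G.dist u v = a := dist_comm
    omega
  have : Nonempty V := ⟨v⟩
  choose! g hg using fun i (hi : i ≤ b) => hG.exists_dist_eq_of_le_dist hi
  choose! h hh using fun i (hi : i ≤ a) => hG.exists_dist_eq_of_le_dist hi
  -- `d(u, w) ≤ (a - i) + d(h i, g i) + (b - i)`, so `g i` and `h i` are `3` apart once
  -- `2 i + r ≥ a + b + 3`.
  let S : Finset (ℕ ⊕ ℕ) :=
    (range (min (b + 1) r)).disjSum (Ico ((a + b + 4 - r) / 2) (min (a + 1) r))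
  let f : ℕ ⊕ ℕ → V := Sum.elim g h
  have hlevel : ∀ p ∈ S, G.dist v (f p) = p.elim id id ∧ p.elim id id < r := by
    rintro (i | i) hi <;>
      simp only [S, inl_mem_disjSum, inr_mem_disjSum, mem_range, mem_Ico] at hi
    · exact ⟨(hg i (by omega)).1, by simp; omega⟩
    · exact ⟨(hh i (by omega)).1, by simp; omega⟩
  have hsame : ∀ i, (a + b + 4 - r) / 2 ≤ i → i ≤ a → i ≤ b → 3 ≤ G.dist (g i) (h i) := by
    intro i hi hia hib
    have := hG.dist_triangle (u := u) (v := h i) (w := w)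
    have := hG.dist_triangle (u := h i) (v := g i) (w := w)
    have : G.dist u (h i) = G.dist (h i) u := dist_comm
    have : G.dist (h i) (g i) = G.dist (g i) (h i) := dist_comm
    have := hg i hib
    have := hh i hia
    omega
  have hsep : ∀ p ∈ S, ∀ q ∈ S, p ≠ q → G.dist v (f p) = G.dist v (f q) →
      3 ≤ G.dist (f p) (f q) := by
    intro p hp q hq hpq hpq'
    rw [(hlevel p hp).1, (hlevel q hq).1] at hpq'
    rcases p with i | i <;> rcases q with j | j <;>
      simp only [S, inl_mem_disjSum, inr_mem_disjSum, mem_range, mem_Ico] at hp hq <;>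
      simp only [Sum.elim_inl, Sum.elim_inr, id] at hpq' <;> subst hpq'
    · exact absurd rfl hpq
    · exact hsame i hq.1 (by omega) (by omega)
    · rw [dist_comm]; exact hsame i hp.1 (by omega) (by omega)
    · exact absurd rfl hpq
  obtain ⟨C, hCS, hSC, hC⟩ := hG.exists_separated_subset_image v S f hsep
  have hS : r ≤ #S := by
    simp only [S, card_disjSum, card_range, Nat.card_Ico]
    omega
  have hCv : ∀ x ∈ C, G.dist v x < r := by
    intro x hx
    obtain ⟨p, hp, rfl⟩ := hCS hx
    exact (hlevel p hp).1 ▸ (hlevel p hp).2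
  calc (r + 2) / 3 * (G.minDegree + 1) ≤ #C * (G.minDegree + 1) := by gcongr; omega
    _ ≤ #{z | G.dist v z ≤ r} := hG.card_mul_le_card_dist_le hCv hC

lemma sum_card_dist_le_eq (G : SimpleGraph V) (r : ℕ) :
    ∑ v, #{z | G.dist v z ≤ r} = 2 * (G.power r).edgeSet.ncard + Fintype.card V := by
  classical
  have hball : ∀ v, ({z | G.dist v z ≤ r} : Finset V) =
      insert v ((G.power r).neighborFinset v) := by
    intro v
    ext z
    simp only [mem_filter, mem_univ, true_and, mem_insert, mem_neighborFinset, power_adj]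
    constructor
    · intro hz
      obtain rfl | hzv := eq_or_ne z v
      exacts [.inl rfl, .inr ⟨hzv.symm, hz⟩]
    · rintro (rfl | hz)
      exacts [by simp, hz.2]
  simp_rw [hball, card_insert_of_notMem ((G.power r).notMem_neighborFinset_self _),
    card_neighborFinset_eq_degree, sum_add_distrib, sum_degrees_eq_twice_card_edges,
    Set.ncard_eq_toFinset_card', sum_const, card_univ, smul_eq_mul, mul_one]
  rfl

end SimpleGraph

theorem edge_growth_loops_ne_zero_mod_three_general {V : Type*} [Fintype V]
    (G : SimpleGraph V) [DecidableRel G.Adj] (hG : G.Connected)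
    (r : ℕ)
    (hdiam : ∃ u w : V, r ≤ G.dist u w) :
    (1 / 2 : ℝ) * (⌈(r : ℝ) / 3⌉ : ℝ) * (G.minDegree + 1) * Nat.card V
        + (1 / 2 : ℝ) * Nat.card V
      ≤ ((G.power r).edgeSet.ncard : ℝ) + Nat.card V := by
  obtain ⟨u, w, huw⟩ := hdiam
  have hball : ∀ v, (r + 2) / 3 * (G.minDegree + 1) ≤ #{z | G.dist v z ≤ r} := fun v => by
    rcases le_total (G.dist v u) (G.dist v w) with h | h
    · exact hG.le_card_dist_le huw h
    · exact hG.le_card_dist_le (huw.trans_eq SimpleGraph.dist_comm) h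
  have hsum : Fintype.card V * ((r + 2) / 3 * (G.minDegree + 1)) ≤
      2 * (G.power r).edgeSet.ncard + Fintype.card V := by
    rw [← G.sum_card_dist_le_eq r, ← smul_eq_mul, ← card_univ]
    exact card_nsmul_le_sum _ _ _ fun v _ => hball v
  have hceil : (⌈(r : ℝ) / 3⌉ : ℝ) ≤ ((r + 2) / 3 : ℕ) := by
    generalize hR : (r + 2) / 3 = R
    have h3 : (r : ℝ) / 3 ≤ ((R : ℤ) : ℝ) := by
      rw [Int.cast_natCast, div_le_iff₀ (by norm_num)]
      exact_mod_cast (by omega : r ≤ R * 3)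
    exact_mod_cast Int.ceil_le.2 h3
  rw [Nat.card_eq_fintype_card]
  have hsumR : (Fintype.card V : ℝ) * (((r + 2) / 3 : ℕ) * (G.minDegree + 1)) ≤
      2 * (G.power r).edgeSet.ncard + Fintype.card V := by exact_mod_cast hsum
  nlinarith [mul_le_mul_of_nonneg_right hceil
    (by positivity : (0 : ℝ) ≤ (G.minDegree + 1) * Fintype.card V)]

/-- for a connected graph with a loop at every vertex (minimum degree
`δ = G.minDegree + 1` counting loops, and `e(G^r) = ` the number of loopless power
edges plus one loop per vertex), if `r ≥ 6`, `r ≢ 0 (mod 3)` and `diam(G) ≥ r`, then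
`e(G^r) ≥ (1/2)·⌈r/3⌉·δ·|G| + (1/2)·|G|`. -/
theorem edge_growth_loops_ne_zero_mod_three {V : Type*} [Fintype V]
    (G : SimpleGraph V) [DecidableRel G.Adj] (hG : G.Connected)
    (r : ℕ) (hr3 : r % 3 ≠ 0) (hr : 6 ≤ r)
    (hdiam : ∃ u w : V, r ≤ G.dist u w) :
    (1 / 2 : ℝ) * (⌈(r : ℝ) / 3⌉ : ℝ) * (G.minDegree + 1) * Nat.card V
        + (1 / 2 : ℝ) * Nat.card V
      ≤ ((G.power r).edgeSet.ncard : ℝ) + Nat.card V :=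
  edge_growth_loops_ne_zero_mod_three_general G hG r hdiam
end

section
/- Let G be a connected d-regular simple graph and r ≥ 6 with r ≢ 0 (mod 3) and diam(G) ≥ r. Then e(G^r)/e(G) ≥ ⌈r/3⌉. -/
namespace SimpleGraph

open Finset

variable {V : Type*} {G : SimpleGraph V}

lemma Reachable.exists_dist_eq {u w : V} (h : G.Reachable u w) {i : ℕ} (hi : i ≤ G.dist u w) :
    ∃ x, G.dist u x = i := by
  obtain ⟨p, hp⟩ := h.exists_walk_length_eq_dist
  refine ⟨p.getVert i, ?_⟩
  rw [← length_eq_dist_of_subwalk hp (p.isSubwalk_take i), Walk.take_length]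
  omega

variable [Fintype V]

lemma ncard_edgeSet [DecidableRel G.Adj] : G.edgeSet.ncard = #G.edgeFinset := by
  rw [← coe_edgeFinset, Set.ncard_coe_finset]

lemma degree_power_add_one (r : ℕ) [DecidableRel (G.power r).Adj] (v : V) :
    (G.power r).degree v + 1 = #{w | G.dist v w ≤ r} := by
  classical
  have hnbhd : (G.power r).neighborFinset v = ({w | G.dist v w ≤ r} : Finset V).erase v := by
    ext w
    rw [mem_neighborFinset]
    simp [power, ne_comm]
  rw [← card_neighborFinset_eq_degree, hnbhd, card_erase_add_one (by simp)]

lemma mul_add_one_le_card_filter_dist_le_of_dist_eq [DecidableRel G.Adj] {d : ℕ}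
    (hreg : G.IsRegularOfDegree d) {v : V} {m r : ℕ} (hmr : 3 * m + 1 ≤ r) {x : ℕ → V}
    (hx : ∀ j ≤ m, G.dist v (x j) = 3 * j) :
    (m + 1) * (d + 1) ≤ #{w | G.dist v w ≤ r} := by
  classical
  set T : ℕ → Finset V := fun j => insert (x j) (G.neighborFinset (x j))
  have hshell : ∀ j ≤ m, ∀ y ∈ T j, 3 * j ≤ G.dist v y + 1 ∧ G.dist v y ≤ 3 * j + 1 := by
    intro j hj y hy
    have := hx j hj
    rcases mem_insert.mp hy with rfl | hadj
    · omega
    · have := ((G.mem_neighborFinset _ _).mp hadj).diff_dist_adj (u := v)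
      omega
  have hcard : ∀ j, #(T j) = d + 1 := fun j => by
    rw [card_insert_of_notMem (by simp), card_neighborFinset_eq_degree, hreg.degree_eq]
  have hdisj : (range (m + 1) : Set ℕ).PairwiseDisjoint T := by
    intro i hi j hj hij
    refine Finset.disjoint_left.mpr fun y hyi hyj => hij ?_
    have := hshell i (Nat.lt_succ_iff.mp (mem_range.mp hi)) y hyi
    have := hshell j (Nat.lt_succ_iff.mp (mem_range.mp hj)) y hyj
    omega
  have hsub : (range (m + 1)).biUnion T ⊆ ({w | G.dist v w ≤ r} : Finset V) := by
    intro y hy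
    obtain ⟨j, hj, hyT⟩ := mem_biUnion.mp hy
    have hjm := Nat.lt_succ_iff.mp (mem_range.mp hj)
    have := hshell j hjm y hyT
    simp only [mem_filter, mem_univ, true_and]
    omega
  calc (m + 1) * (d + 1) = #((range (m + 1)).biUnion T) := by
        rw [card_biUnion hdisj, sum_congr rfl fun j _ => hcard j, sum_const, card_range,
          smul_eq_mul]
    _ ≤ _ := card_le_card hsub

lemma Reachable.mul_add_one_le_card_filter_dist_le [DecidableRel G.Adj] {d : ℕ}
    (hreg : G.IsRegularOfDegree d) {v z : V} (h : G.Reachable v z) {m r : ℕ}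
    (hz : 3 * m ≤ G.dist v z) (hmr : 3 * m + 1 ≤ r) :
    (m + 1) * (d + 1) ≤ #{w | G.dist v w ≤ r} := by
  have : Nonempty V := ⟨v⟩
  choose! x hx using fun j (hj : j ≤ m) => h.exists_dist_eq (i := 3 * j) (by omega)
  exact mul_add_one_le_card_filter_dist_le_of_dist_eq hreg hmr hx

lemma Connected.mul_add_one_le_card_filter_dist_le [DecidableRel G.Adj] (hG : G.Connected)
    {d : ℕ} (hreg : G.IsRegularOfDegree d) {u w : V} {m r : ℕ} (huw : r ≤ G.dist u w)
    (hmr : 3 * m + 1 ≤ r) (v : V) :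
    (m + 1) * (d + 1) ≤ #{y | G.dist v y ≤ r} := by
  by_cases hfar : ∃ z, 3 * m ≤ G.dist v z
  · obtain ⟨z, hz⟩ := hfar
    exact (hG v z).mul_add_one_le_card_filter_dist_le hreg hz hmr
  · push Not at hfar
    have hball : ({y | G.dist v y ≤ r} : Finset V) = univ :=
      filter_true_of_mem fun y _ => by have := hfar y; omega
    rw [hball]
    exact ((hG u w).mul_add_one_le_card_filter_dist_le hreg (by omega) hmr).trans
      (card_le_univ _)

lemma mul_card_edgeFinset_le_of_forall_mul_degree_le [DecidableRel G.Adj] {H : SimpleGraph V}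
    [DecidableRel H.Adj] {k : ℕ} (h : ∀ v, k * G.degree v ≤ H.degree v) :
    k * #G.edgeFinset ≤ #H.edgeFinset := by
  classical
  have : 2 * (k * #G.edgeFinset) ≤ 2 * #H.edgeFinset :=
    calc 2 * (k * #G.edgeFinset) = ∑ v, k * G.degree v := by
          rw [← mul_sum, sum_degrees_eq_twice_card_edges]; ring
    _ ≤ ∑ v, H.degree v := sum_le_sum fun v _ => h v
    _ = 2 * #H.edgeFinset := sum_degrees_eq_twice_card_edges H
  omega

lemma Connected.mul_card_edgeFinset_le_card_edgeFinset_power [DecidableRel G.Adj]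
    (hG : G.Connected) {d : ℕ} (hreg : G.IsRegularOfDegree d) {u w : V} {m r : ℕ}
    (huw : r ≤ G.dist u w) (hmr : 3 * m + 1 ≤ r) [DecidableRel (G.power r).Adj] :
    (m + 1) * #G.edgeFinset ≤ #(G.power r).edgeFinset := by
  refine mul_card_edgeFinset_le_of_forall_mul_degree_le fun v => ?_
  have := hG.mul_add_one_le_card_filter_dist_le hreg huw hmr v
  rw [← degree_power_add_one, mul_add_one] at this
  rw [hreg.degree_eq]
  omega

end SimpleGraph

theorem edge_growth_regular_ne_zero_mod_three_general {V : Type*} [Fintype V]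
    (G : SimpleGraph V) [DecidableRel G.Adj] (hG : G.Connected)
    (d : ℕ) (hreg : G.IsRegularOfDegree d)
    (r : ℕ) (hr3 : r % 3 ≠ 0)
    (hdiam : ∃ u w : V, r ≤ G.dist u w) :
    (⌈(r : ℝ) / 3⌉ : ℝ) ≤ ((G.power r).edgeSet.ncard : ℝ) / (G.edgeSet.ncard : ℝ) := by
  classical
  obtain ⟨u, w, huw⟩ := hdiam
  have hedges := hG.mul_card_edgeFinset_le_card_edgeFinset_power hreg huw
    (show 3 * (r / 3) + 1 ≤ r by omega)
  obtain ⟨x, hx⟩ := (hG u w).exists_dist_eq (i := 1) (by omega)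
  have hpos : 0 < G.edgeFinset.card :=
    Finset.card_pos.mpr ⟨s(u, x), G.mem_edgeFinset.mpr (G.dist_eq_one_iff_adj.mp hx)⟩
  have hceil : ⌈(r : ℝ) / 3⌉ ≤ ((r / 3 + 1 : ℕ) : ℤ) := by
    rw [Int.ceil_le, div_le_iff₀ three_pos]
    exact_mod_cast (by omega : r ≤ (r / 3 + 1) * 3)
  rw [G.ncard_edgeSet, (G.power r).ncard_edgeSet, le_div_iff₀ (by exact_mod_cast hpos)]
  calc (⌈(r : ℝ) / 3⌉ : ℝ) * G.edgeFinset.card ≤ ((r / 3 + 1 : ℕ) : ℝ) * G.edgeFinset.card := by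
        gcongr
        exact (Int.cast_le.mpr hceil).trans_eq (Int.cast_natCast _)
    _ ≤ (G.power r).edgeFinset.card := by exact_mod_cast hedges

/-- for a connected `d`-regular simple graph with `r ≥ 6`,
`r ≢ 0 (mod 3)` and `diam(G) ≥ r`, we have `e(G^r)/e(G) ≥ ⌈r/3⌉`. -/
theorem edge_growth_regular_ne_zero_mod_three {V : Type*} [Fintype V]
    (G : SimpleGraph V) [DecidableRel G.Adj] (hG : G.Connected)
    (d : ℕ) (hreg : G.IsRegularOfDegree d)
    (r : ℕ) (hr3 : r % 3 ≠ 0) (hr : 6 ≤ r)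
    (hdiam : ∃ u w : V, r ≤ G.dist u w) :
    (⌈(r : ℝ) / 3⌉ : ℝ) ≤ ((G.power r).edgeSet.ncard : ℝ) / (G.edgeSet.ncard : ℝ) :=
  edge_growth_regular_ne_zero_mod_three_general G hG d hreg r hr3 hdiam
end

section
/- Let G be a connected graph (with loops at every vertex, minimum degree δ counting loops), r ≥ 6, diam(G) ≥ r, and suppose every vertex of G is within distance r−1 of a vertex v. Then |N^r(v)| = |V(G)| ≥ ⌈r/3⌉·δ. -/
/-!
Along a geodesic of length at least `r`, the vertices at positions `0, 3, 6, …, 3(⌈r/3⌉ - 1)` are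
pairwise at distance at least `3`, so their closed neighbourhoods are pairwise disjoint. Each
closed neighbourhood has at least `δ = minDegree + 1` vertices, which gives `⌈r/3⌉ · δ` distinct
vertices.
-/

/-- The ball of radius `r` around `v` (the `r`-th neighbourhood `N^r(v)`). -/
def SimpleGraph.natDistBall {V : Type*} (G : SimpleGraph V) (r : ℕ) (v : V) : Set V :=
  {u : V | G.dist v u ≤ r}

namespace SimpleGraph

variable {V : Type*} {G : SimpleGraph V} {u w : V}

namespace Walk

lemma dist_getVert_add_le (p : G.Walk u w) (i k : ℕ) :
    G.dist (p.getVert i) (p.getVert (i + k)) ≤ k := by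
  have := dist_le ((p.drop i).take k)
  rw [take_length, drop_getVert] at this
  exact this.trans (min_le_left _ _)

lemma sub_le_dist_getVert_of_length_eq_dist (p : G.Walk u w) (hp : p.length = G.dist u w)
    {i j : ℕ} (hij : i ≤ j) (hj : j ≤ p.length) :
    j - i ≤ G.dist (p.getVert i) (p.getVert j) := by
  have hu : G.dist u (p.getVert i) ≤ i := by simpa using p.dist_getVert_add_le 0 i
  have hw : G.dist (p.getVert j) w ≤ p.length - j := by
    simpa [Nat.add_sub_cancel' hj] using p.dist_getVert_add_le j (p.length - j)
  have h₁ := (p.take i).reachable.dist_triangle_left (w := w)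
  have h₂ := ((p.drop i).take (j - i)).reachable.dist_triangle_left (w := w)
  simp only [drop_getVert, Nat.add_sub_cancel' hij] at h₂
  omega

end Walk

lemma disjoint_closedNeighborFinset_of_three_le_dist [Fintype V] [DecidableRel G.Adj]
    [DecidableEq V] {a b : V} (h : 3 ≤ G.dist a b) :
    Disjoint (insert a (G.neighborFinset a)) (insert b (G.neighborFinset b)) := by
  have near : ∀ {x y : V}, y ∈ insert x (G.neighborFinset x) →
      G.Reachable x y ∧ G.dist x y ≤ 1 := by
    intro x y hy
    rcases Finset.mem_insert.mp hy with rfl | hxy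
    · simp
    · rw [mem_neighborFinset] at hxy
      exact ⟨hxy.reachable, (dist_eq_one_iff_adj.mpr hxy).le⟩
  refine Finset.disjoint_left.mpr fun y hya hyb ↦ ?_
  obtain ⟨hay, hay'⟩ := near hya
  have hby := (near hyb).2
  have := hay.dist_triangle_left b
  rw [dist_comm (u := y)] at this
  omega

lemma card_mul_minDegree_succ_le_card [Fintype V] [DecidableRel G.Adj] {ι : Type*}
    (s : Finset ι) (f : ι → V) (hf : (s : Set ι).Pairwise fun i j ↦ 3 ≤ G.dist (f i) (f j)) :
    s.card * (G.minDegree + 1) ≤ Fintype.card V := by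
  classical
  let ball : ι → Finset V := fun i ↦ insert (f i) (G.neighborFinset (f i))
  have hball : ∀ i, G.minDegree + 1 ≤ (ball i).card := fun i ↦ by
    rw [Finset.card_insert_of_notMem (by simp), card_neighborFinset_eq_degree]
    exact Nat.succ_le_succ (G.minDegree_le_degree _)
  have hdisj : (s : Set ι).PairwiseDisjoint ball :=
    hf.mono' fun _ _ ↦ disjoint_closedNeighborFinset_of_three_le_dist
  calc s.card * (G.minDegree + 1) = ∑ _i ∈ s, (G.minDegree + 1) := by
        rw [Finset.sum_const, smul_eq_mul]
    _ ≤ ∑ i ∈ s, (ball i).card := Finset.sum_le_sum fun i _ ↦ hball i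
    _ = (s.biUnion ball).card := (Finset.card_biUnion hdisj).symm
    _ ≤ Fintype.card V := Finset.card_le_univ _

lemma Reachable.mul_minDegree_succ_le_card [Fintype V] [DecidableRel G.Adj]
    (huw : G.Reachable u w) {k : ℕ} (hk : 3 * (k - 1) ≤ G.dist u w) :
    k * (G.minDegree + 1) ≤ Fintype.card V := by
  obtain ⟨p, hp⟩ := huw.exists_walk_length_eq_dist
  have far : ∀ s t, s < t → t < k → 3 ≤ G.dist (p.getVert (3 * s)) (p.getVert (3 * t)) :=
    fun s t hst htk ↦ by
      have := p.sub_le_dist_getVert_of_length_eq_dist hp (i := 3 * s) (j := 3 * t)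
        (by omega) (by omega)
      omega
  simpa using card_mul_minDegree_succ_le_card (Finset.range k) (fun t ↦ p.getVert (3 * t))
    fun s hs t ht hst ↦ by
      simp only [Finset.coe_range, Set.mem_Iio] at hs ht
      rcases Nat.lt_or_gt_of_ne hst with h | h
      · exact far s t h ht
      · exact dist_comm (G := G) ▸ far t s h hs

end SimpleGraph

theorem edge_growth_everything_close_general {V : Type*} [Fintype V]
    (G : SimpleGraph V) [DecidableRel G.Adj] (hG : G.Connected)
    (r : ℕ)
    (hdiam : ∃ u w : V, r ≤ G.dist u w)
    (v : V) (hv : ∀ u : V, G.dist v u ≤ r - 1) :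
    G.natDistBall r v = Set.univ ∧
      (⌈(r : ℝ) / 3⌉ : ℝ) * (G.minDegree + 1) ≤ (Nat.card V : ℝ) := by
  refine ⟨Set.eq_univ_of_forall fun u ↦ (hv u).trans (Nat.sub_le r 1), ?_⟩
  obtain ⟨u, w, hr⟩ := hdiam
  have hcount : (r + 2) / 3 * (G.minDegree + 1) ≤ Fintype.card V :=
    (hG u w).mul_minDegree_succ_le_card (by omega)
  have hceil : (⌈(r : ℝ) / 3⌉ : ℝ) ≤ ((r + 2) / 3 : ℕ) := by
    have : ⌈(r : ℝ) / 3⌉ ≤ ((r + 2) / 3 : ℕ) := by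
      rw [Int.ceil_le, div_le_iff₀ (by norm_num)]
      exact_mod_cast (by omega : r ≤ (r + 2) / 3 * 3)
    exact (Int.cast_le.mpr this).trans_eq (Int.cast_natCast _)
  rw [Nat.card_eq_fintype_card]
  calc (⌈(r : ℝ) / 3⌉ : ℝ) * (G.minDegree + 1)
      ≤ ((r + 2) / 3 : ℕ) * (G.minDegree + 1) := by gcongr
    _ ≤ Fintype.card V := by exact_mod_cast hcount

/-- in a connected graph with a loop at every vertex (minimum degree
`δ = G.minDegree + 1` counting loops), if `r ≥ 6`, `diam(G) ≥ r` and every vertex is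
within distance `r − 1` of `v`, then `N^r(v)` is the whole vertex set and
`|V(G)| ≥ ⌈r/3⌉·δ`. -/
theorem edge_growth_everything_close {V : Type*} [Fintype V]
    (G : SimpleGraph V) [DecidableRel G.Adj] (hG : G.Connected)
    (r : ℕ) (hr : 6 ≤ r)
    (hdiam : ∃ u w : V, r ≤ G.dist u w)
    (v : V) (hv : ∀ u : V, G.dist v u ≤ r - 1) :
    G.natDistBall r v = Set.univ ∧
      (⌈(r : ℝ) / 3⌉ : ℝ) * (G.minDegree + 1) ≤ (Nat.card V : ℝ) :=
  edge_growth_everything_close_general G hG r hdiam v hv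
end
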